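/- arXiv:2405.13609 — 2 statements merged into one kernel-verified Lean document; each statement's English description precedes it below -/
import Mathlib

section
/- Let r₀, ..., r_{T-1} be real numbers and define h₀ = 0 and h_{t+1} = max(0, h_t - r_t) for 0 ≤ t < T. Then ∑_{t=0}^{T-1} max(0, r_t - h_t) = max over k ∈ {-1, 0, ..., T-1} of ∑_{i=0}^{k} r_i, where the empty sum (k = -1) is 0. -/
/-!
Let `S n = ∑_{i<n} r i` and let `M n = max_{k ≤ n} S k` be the running maximum of the prefix sums
(`M 0 = S 0 = 0`). By induction, `h n = M n - S n` is the drawdown of the prefix sum below its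
running maximum, and then the adapted reward `max 0 (r n - h n)` is exactly the increment
`M (n + 1) - M n`. Summing telescopes to `M T - M 0 = M T`.
-/

open Finset

section LinearOrderedAddCommGroup

variable {α : Type*} [AddCommGroup α] [LinearOrder α] [IsOrderedAddMonoid α]

lemma max_zero_sub_sub_eq_max_sub_add (m s x : α) :
    max 0 (m - s - x) = max m (s + x) - (s + x) := by
  rw [← max_sub_sub_right, sub_self, sub_sub, max_comm]

lemma max_zero_sub_sub_eq_max_add_sub (m s x : α) :
    max 0 (x - (m - s)) = max m (s + x) - m := by
  rw [← max_sub_sub_right, sub_self]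
  congr 1
  abel

variable {r h : ℕ → α}

theorem eq_partialSups_sum_range_sub (h0 : h 0 = 0) (hrec : ∀ t, h (t + 1) = max 0 (h t - r t))
    (n : ℕ) :
    h n = partialSups (fun k ↦ ∑ i ∈ range k, r i) n - ∑ i ∈ range n, r i := by
  induction n with
  | zero => simp [h0]
  | succ n ih =>
    rw [hrec, ih, partialSups_add_one, sum_range_succ, max_zero_sub_sub_eq_max_sub_add]

theorem max_zero_sub_eq_partialSups_succ_sub (h0 : h 0 = 0)
    (hrec : ∀ t, h (t + 1) = max 0 (h t - r t)) (n : ℕ) :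
    max 0 (r n - h n) = partialSups (fun k ↦ ∑ i ∈ range k, r i) (n + 1) -
      partialSups (fun k ↦ ∑ i ∈ range k, r i) n := by
  rw [eq_partialSups_sum_range_sub h0 hrec, partialSups_add_one, sum_range_succ,
    max_zero_sub_sub_eq_max_add_sub]

end LinearOrderedAddCommGroup

/-- Telescoping identity for the maximum-prefix-sum objective: with
`h₀ = 0`, `h_{t+1} = max 0 (h_t - r t)`, the adapted rewards `max 0 (r_t - h_t)`
sum to the maximum over `k ∈ {-1,0,...,T-1}` of the prefix sums `∑_{i=0}^k r_i`
(a prefix of length `n` corresponds to `k = n - 1`; `n = 0` is the empty prefix). -/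
theorem max_prefix_sum_telescoping (T : ℕ) (r h : ℕ → ℝ) (h0 : h 0 = 0)
    (hrec : ∀ t, h (t + 1) = max 0 (h t - r t)) :
    ∑ t ∈ Finset.range T, max 0 (r t - h t) =
      (Finset.range (T + 1)).sup' (Finset.nonempty_range_iff.mpr (by omega))
        (fun n => ∑ i ∈ Finset.range n, r i) := by
  rw [← partialSups_eq_sup'_range, sum_congr rfl fun t _ ↦
    max_zero_sub_eq_partialSups_succ_sub h0 hrec t, sum_range_sub]
  simp
end

section
/- Let M̃ be a finite non-cumulative Markov decision process with finite state, action, and reward spaces, objective function f, and transition kernel p̃. Let M be the corresponding MDP with states s_t = (s̃_t, h_t), adapted rewards r_t = ρ(h_t, r̃_t) satisfying r_t = f(r̃₀,...,r̃_t) − f(r̃₀,...,r̃_{t-1}), auxiliary update h_{t+1} = u(h_t, r̃_t), and transition kernel p(r_t, s_{t+1} | s_t, a_t) = ∑_{r̃_t} p̃(r̃_t, s̃_{t+1} | s̃_t, a_t)·[h_{t+1} = u(h_t, r̃_t)]·[r_t = ρ(h_t, r̃_t)]. Then for any policy π(a|s) of M, used in M̃ by computing h_t along the trajectory, the probability of a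 trajectory T of M equals the sum of probabilities of all trajectories T̃ of M̃ that map to T. -/
/-! Mapping an NCMDP to a corresponding MDP: the trajectory distribution of the
corresponding MDP is the pushforward of the NCMDP trajectory distribution under
the trajectory mapping (Equation (9) of the paper). Trajectories have fixed
horizon `T`; a trajectory records, for each step, the action taken, the reward
received, and the next state. `P` is the finite reward alphabet of the NCMDP
with values `val : P → ℝ`. -/

/-- State of the NCMDP at time `t` along a trajectory (`s0` is the fixed
initial state). -/
def ncState {S A P : Type} (T : ℕ) (s0 : S) (τ : Fin T → A × P × S) : ℕ → S
  | 0 => s0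
  | t + 1 => if h : t < T then (τ ⟨t, h⟩).2.2 else s0

/-- Auxiliary reward-history information `h_t`, updated by `u`. -/
def ncAux {S A P H : Type} (T : ℕ) (u : H → ℝ → H) (val : P → ℝ) (h0 : H)
    (τ : Fin T → A × P × S) : ℕ → H
  | 0 => h0
  | t + 1 => if h : t < T then u (ncAux T u val h0 τ t) (val (τ ⟨t, h⟩).2.1)
             else ncAux T u val h0 τ t

/-- Probability of an NCMDP trajectory when the policy `π` (a policy of the
corresponding MDP, acting on augmented states `(s̃_t, h_t)`) is used via the
trajectory mapping; `pt s a p s'` is `p̃(r̃ = p, s' | s, a)`. -/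
def ncProb {S A P H : Type} (T : ℕ) (s0 : S) (h0 : H) (u : H → ℝ → H)
    (val : P → ℝ) (π : S × H → A → ℝ) (pt : S → A → P → S → ℝ)
    (τ : Fin T → A × P × S) : ℝ :=
  ∏ t : Fin T,
    π (ncState T s0 τ t, ncAux T u val h0 τ t) (τ t).1 *
      pt (ncState T s0 τ t) (τ t).1 (τ t).2.1 (ncState T s0 τ (t + 1))

/-- Mapping of NCMDP trajectories to trajectories of the corresponding MDP:
actions are kept, rewards are replaced by the adapted rewards `ρ(h_t, r̃_t)`,
and states are augmented with `h_{t+1}`. -/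
def mapTraj {S A P H : Type} (T : ℕ) (s0 : S) (h0 : H) (u : H → ℝ → H)
    (ρ : H → ℝ → ℝ) (val : P → ℝ) (τ : Fin T → A × P × S) :
    Fin T → A × ℝ × (S × H) :=
  fun t => ((τ t).1, ρ (ncAux T u val h0 τ t) (val (τ t).2.1),
    ((τ t).2.2, ncAux (S := S) (A := A) T u val h0 τ (t + 1)))

/-- State of the corresponding MDP at time `t` along one of its trajectories. -/
def mState {S A H : Type} (T : ℕ) (s0 : S) (h0 : H)
    (τ : Fin T → A × ℝ × (S × H)) : ℕ → S × H
  | 0 => (s0, h0)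
  | t + 1 => if h : t < T then (τ ⟨t, h⟩).2.2 else (s0, h0)

/-- Transition kernel of the corresponding MDP,
`p(r, s' | s, a) = ∑_{r̃} p̃(r̃, s̃' | s̃, a)·[h' = u(h, r̃)]·[r = ρ(h, r̃)]`. -/
noncomputable def mKernel {S A P H : Type} [Fintype P] [DecidableEq H]
    (pt : S → A → P → S → ℝ) (u : H → ℝ → H) (ρ : H → ℝ → ℝ) (val : P → ℝ) :
    S × H → A → ℝ → S × H → ℝ :=
  fun s a r s' => ∑ p : P,
    pt s.1 a p s'.1 * (if s'.2 = u s.2 (val p) then 1 else 0)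
      * (if r = ρ s.2 (val p) then 1 else 0)

/-- Probability of a trajectory of the corresponding MDP under policy `π`. -/
noncomputable def mProb {S A P H : Type} [Fintype P] [DecidableEq H] (T : ℕ) (s0 : S) (h0 : H)
    (u : H → ℝ → H) (ρ : H → ℝ → ℝ) (val : P → ℝ) (π : S × H → A → ℝ)
    (pt : S → A → P → S → ℝ) (τ : Fin T → A × ℝ × (S × H)) : ℝ :=
  ∏ t : Fin T,
    π (mState T s0 h0 τ t) (τ t).1 *
      mKernel pt u ρ val (mState T s0 h0 τ t) (τ t).1 (τ t).2.1
        (mState T s0 h0 τ (t + 1))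

/-!
Expanding the product of sums in `mProb τ'` writes it as a sum over NCMDP reward sequences
`g`, in which the term of `g` survives iff the indicators of `mKernel` hold along `τ'`.
These `g` are exactly those for which the NCMDP trajectory with the actions and states of
`τ'` and rewards `g` maps to `τ'`, and every NCMDP trajectory mapping to `τ'` is of this form.
Along such a trajectory the augmented states of `τ'` are the pairs `(s̃_t, h_t)`, so the
surviving terms are the NCMDP trajectory probabilities.
-/

section Trajectories

variable {S A P H : Type} {T : ℕ} {s0 : S} {h0 : H} {u : H → ℝ → H} {ρ : H → ℝ → ℝ}
  {val : P → ℝ}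

def withRewards (τ' : Fin T → A × ℝ × (S × H)) (g : Fin T → P) : Fin T → A × P × S :=
  fun t => ((τ' t).1, g t, (τ' t).2.2.1)

/-- The indicator conditions of `mKernel` along `τ'`, for the NCMDP rewards `g`. -/
def IsRewardLift (s0 : S) (h0 : H) (u : H → ℝ → H) (ρ : H → ℝ → ℝ) (val : P → ℝ)
    (τ' : Fin T → A × ℝ × (S × H)) (g : Fin T → P) : Prop :=
  ∀ t : Fin T, (mState T s0 h0 τ' (t + 1)).2 = u (mState T s0 h0 τ' t).2 (val (g t)) ∧
    (τ' t).2.1 = ρ (mState T s0 h0 τ' t).2 (val (g t))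

theorem withRewards_injective (τ' : Fin T → A × ℝ × (S × H)) :
    Function.Injective (withRewards (P := P) τ') :=
  fun _ _ h => funext fun t => congrArg (fun τ => (τ t).2.1) h

theorem ncAux_succ (τ : Fin T → A × P × S) (t : Fin T) :
    ncAux T u val h0 τ (t + 1) = u (ncAux T u val h0 τ t) (val (τ t).2.1) := by
  simp [ncAux, t.isLt]

theorem mState_succ (τ' : Fin T → A × ℝ × (S × H)) (t : Fin T) :
    mState T s0 h0 τ' (t + 1) = (τ' t).2.2 := by
  simp [mState, t.isLt]

theorem mState_mapTraj (τ : Fin T → A × P × S) {t : ℕ} (ht : t ≤ T) :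
    mState T s0 h0 (mapTraj T s0 h0 u ρ val τ) t = (ncState T s0 τ t, ncAux T u val h0 τ t) := by
  cases t with
  | zero => rfl
  | succ t => simp [mState, ncState, mapTraj, Nat.lt_of_succ_le ht]

theorem eq_withRewards_of_mapTraj_eq {τ : Fin T → A × P × S} {τ' : Fin T → A × ℝ × (S × H)}
    (h : mapTraj T s0 h0 u ρ val τ = τ') : τ = withRewards τ' (fun t => (τ t).2.1) := by
  subst h
  rfl

theorem ncProb_eq_of_mapTraj_eq {π : S × H → A → ℝ} {pt : S → A → P → S → ℝ}
    {τ : Fin T → A × P × S} {τ' : Fin T → A × ℝ × (S × H)}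
    (h : mapTraj T s0 h0 u ρ val τ = τ') :
    ncProb T s0 h0 u val π pt τ = ∏ t : Fin T,
      π (mState T s0 h0 τ' t) (τ' t).1 *
        pt (mState T s0 h0 τ' t).1 (τ' t).1 (τ t).2.1 (mState T s0 h0 τ' (t + 1)).1 := by
  subst h
  refine Finset.prod_congr rfl fun t _ => ?_
  rw [mState_mapTraj τ t.isLt.le, mState_mapTraj τ t.isLt]
  rfl

theorem ncAux_withRewards_of_isRewardLift {τ' : Fin T → A × ℝ × (S × H)} {g : Fin T → P}
    (hg : IsRewardLift s0 h0 u ρ val τ' g) :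
    ∀ t ≤ T, ncAux T u val h0 (withRewards τ' g) t = (mState T s0 h0 τ' t).2
  | 0, _ => rfl
  | t + 1, ht => by
    have ih := ncAux_withRewards_of_isRewardLift hg t (Nat.le_of_succ_le ht)
    rw [ncAux_succ _ ⟨t, ht⟩, (hg ⟨t, ht⟩).1]
    exact congrArg (u · _) ih

theorem isRewardLift_iff_mapTraj_eq {τ' : Fin T → A × ℝ × (S × H)} {g : Fin T → P} :
    IsRewardLift s0 h0 u ρ val τ' g ↔ mapTraj T s0 h0 u ρ val (withRewards τ' g) = τ' := by
  constructor
  · intro hg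
    funext t
    have hAux := ncAux_withRewards_of_isRewardLift hg
    simp only [mapTraj, withRewards, hAux t t.isLt.le, hAux (t + 1) t.isLt, ← (hg t).2,
      mState_succ]
  · intro h t
    rw [← h, mState_mapTraj _ t.isLt, mState_mapTraj _ t.isLt.le, ncAux_succ]
    exact ⟨rfl, rfl⟩

noncomputable instance [DecidableEq H] (τ' : Fin T → A × ℝ × (S × H)) (g : Fin T → P) :
    Decidable (IsRewardLift s0 h0 u ρ val τ' g) :=
  Fintype.decidableForallFintype

theorem mProb_eq_sum_isRewardLift [Fintype P] [DecidableEq H] (π : S × H → A → ℝ)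
    (pt : S → A → P → S → ℝ) (τ' : Fin T → A × ℝ × (S × H)) :
    mProb T s0 h0 u ρ val π pt τ' = ∑ g : Fin T → P,
      if IsRewardLift s0 h0 u ρ val τ' g then
        ∏ t : Fin T, π (mState T s0 h0 τ' t) (τ' t).1 *
          pt (mState T s0 h0 τ' t).1 (τ' t).1 (g t) (mState T s0 h0 τ' (t + 1)).1
      else 0 := by
  simp only [mProb, mKernel, Finset.mul_sum, Fintype.prod_sum]
  refine Fintype.sum_congr _ _ fun g => ?_
  unfold IsRewardLift
  rw [← Fintype.prod_ite_zero]
  refine Fintype.prod_congr _ _ fun t => ?_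
  split_ifs <;> simp_all

end Trajectories

theorem mdp_prob_eq_pushforward_general {S A P H : Type}
    [Fintype S] [Fintype A] [Fintype P]
    [DecidableEq S] [DecidableEq A] [DecidableEq H]
    (T : ℕ) (s0 : S) (h0 : H) (val : P → ℝ) (u : H → ℝ → H) (ρ : H → ℝ → ℝ)
    (π : S × H → A → ℝ) (pt : S → A → P → S → ℝ) :
    ∀ τ' : Fin T → A × ℝ × (S × H),
      mProb T s0 h0 u ρ val π pt τ' =
        ∑ τ : Fin T → A × P × S,
          if mapTraj T s0 h0 u ρ val τ = τ' then ncProb T s0 h0 u val π pt τ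
          else 0 := by
  intro τ'
  rw [mProb_eq_sum_isRewardLift]
  refine Fintype.sum_of_injective _ (withRewards_injective τ') _ _ ?_ fun g => ?_
  · rintro τ hτ
    exact if_neg fun h => hτ ⟨_, (eq_withRewards_of_mapTraj_eq h).symm⟩
  · by_cases h : mapTraj T s0 h0 u ρ val (withRewards τ' g) = τ'
    · rw [if_pos (isRewardLift_iff_mapTraj_eq.2 h), if_pos h, ncProb_eq_of_mapTraj_eq h]
      rfl
    · rw [if_neg (mt isRewardLift_iff_mapTraj_eq.1 h), if_neg h]

/-- Equation (9): the probability of a trajectory of the corresponding MDP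
equals the sum of the probabilities of all NCMDP trajectories mapping to it. -/
theorem mdp_prob_eq_pushforward {S A P H : Type}
    [Fintype S] [Fintype A] [Fintype P] [Fintype H]
    [DecidableEq S] [DecidableEq A] [DecidableEq H]
    (T : ℕ) (s0 : S) (h0 : H) (val : P → ℝ) (u : H → ℝ → H) (ρ : H → ℝ → ℝ)
    (π : S × H → A → ℝ) (pt : S → A → P → S → ℝ)
    (hπ0 : ∀ s a, 0 ≤ π s a) (hπ1 : ∀ s, ∑ a : A, π s a = 1)
    (hpt0 : ∀ s a p s', 0 ≤ pt s a p s')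
    (hpt1 : ∀ s a, ∑ p : P, ∑ s' : S, pt s a p s' = 1) :
    ∀ τ' : Fin T → A × ℝ × (S × H),
      mProb T s0 h0 u ρ val π pt τ' =
        ∑ τ : Fin T → A × P × S,
          if mapTraj T s0 h0 u ρ val τ = τ' then ncProb T s0 h0 u val π pt τ
          else 0 :=
  mdp_prob_eq_pushforward_general T s0 h0 val u ρ π pt
end
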